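/- Let Ω be a compact convex polytope in ℝ^m whose interior contains the origin, and let r_* = dist(0, Ωᶜ) be the distance from the origin to the complement of Ω. Assume that the intersection of the sphere of radius r_* centered at the origin with the boundary ∂Ω consists of exactly k points p_1, …, p_k. If Ω satisfies the balance law at the origin, then p_1 + ⋯ + p_k = 0. -/

import Mathlib

set_option maxHeartbeats 1000000

open MeasureTheory Metric Set Module
open scoped RealInnerProductSpace ENNReal NNReal

noncomputable section

namespace BalanceAux

variable {m : ℕ}

/-- open spherical cap -/
def cap (w : EuclideanSpace ℝ (Fin m)) (t : ℝ) : Set (EuclideanSpace ℝ (Fin m)) :=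
  sphere 0 1 ∩ {v | t < ⟪w, v⟫}

lemma measurableSet_cap (w : EuclideanSpace ℝ (Fin m)) (t : ℝ) : MeasurableSet (cap w t) :=
  (isClosed_sphere).measurableSet.inter <|
    measurableSet_lt measurable_const (continuous_const.inner continuous_id).measurable

lemma cap_subset_sphere (w : EuclideanSpace ℝ (Fin m)) (t : ℝ) :
    cap w t ⊆ sphere 0 1 := inter_subset_left

section graph

variable (w : EuclideanSpace ℝ (Fin m))

/-- graph parametrization of a cap over the hyperplane `wᗮ` -/
def gmap (x : ((ℝ ∙ w)ᗮ : Submodule ℝ (EuclideanSpace ℝ (Fin m)))) : EuclideanSpace ℝ (Fin m) :=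
  (x : EuclideanSpace ℝ (Fin m)) + Real.sqrt (1 - ‖x‖ ^ 2) • w

variable {w}

lemma inner_eq_zero (x : ((ℝ ∙ w)ᗮ : Submodule ℝ (EuclideanSpace ℝ (Fin m)))) :
    ⟪w, (x : EuclideanSpace ℝ (Fin m))⟫ = 0 :=
  Submodule.mem_orthogonal_singleton_iff_inner_right.1 x.2

lemma inner_gmap (hw : ‖w‖ = 1) (x : ((ℝ ∙ w)ᗮ : Submodule ℝ (EuclideanSpace ℝ (Fin m)))) :
    ⟪w, gmap w x⟫ = Real.sqrt (1 - ‖x‖ ^ 2) := by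
  rw [gmap, inner_add_right, inner_eq_zero x, inner_smul_right,
    real_inner_self_eq_norm_mul_norm, hw]
  ring

lemma norm_gmap (hw : ‖w‖ = 1) (x : ((ℝ ∙ w)ᗮ : Submodule ℝ (EuclideanSpace ℝ (Fin m))))
    (hx : ‖x‖ ≤ 1) : ‖gmap w x‖ = 1 := by
  have h1 : ⟪(x : EuclideanSpace ℝ (Fin m)), Real.sqrt (1 - ‖x‖ ^ 2) • w⟫ = 0 := by
    rw [inner_smul_right, real_inner_comm, inner_eq_zero x, mul_zero]
  have h2 : ‖gmap w x‖ ^ 2 = 1 := by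
    rw [gmap, norm_add_sq_real, h1]
    rw [norm_smul, Real.norm_eq_abs, hw,
      abs_of_nonneg (Real.sqrt_nonneg _), mul_pow, Real.sq_sqrt (by nlinarith [norm_nonneg x])]
    have : ‖(x : EuclideanSpace ℝ (Fin m))‖ = ‖x‖ := rfl
    rw [this]; ring
  nlinarith [norm_nonneg (gmap w x)]

lemma cap_subset_image (hw : ‖w‖ = 1) {t : ℝ} (ht0 : 0 < t) (ht1 : t < 1) :
    cap w t ⊆ gmap w '' (closedBall 0 (Real.sqrt (1 - t ^ 2))) := by
  rintro v ⟨hv, hvt⟩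
  rw [mem_sphere_zero_iff_norm] at hv
  have hwv1 : ⟪w, v⟫ ≤ 1 := by
    calc ⟪w, v⟫ ≤ ‖w‖ * ‖v‖ := real_inner_le_norm w v
    _ = 1 := by rw [hw, hv]; ring
  have hmem : v - ⟪w, v⟫ • w ∈ (ℝ ∙ w)ᗮ := by
    rw [Submodule.mem_orthogonal_singleton_iff_inner_right]
    rw [inner_sub_right, inner_smul_right, real_inner_self_eq_norm_sq, hw]
    ring
  set x : ((ℝ ∙ w)ᗮ : Submodule ℝ (EuclideanSpace ℝ (Fin m))) := ⟨v - ⟪w, v⟫ • w, hmem⟩ with hxdef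
  have hnx : ‖x‖ ^ 2 = 1 - ⟪w, v⟫ ^ 2 := by
    have : ‖x‖ = ‖v - ⟪w, v⟫ • w‖ := rfl
    rw [this, norm_sub_sq_real, inner_smul_right, norm_smul,
      Real.norm_eq_abs, hw, hv, mul_one, sq_abs, real_inner_comm v w]
    ring
  have hvt' : t < ⟪w, v⟫ := hvt
  refine ⟨x, ?_, ?_⟩
  · rw [mem_closedBall_zero_iff]
    have h1 : ‖x‖ ^ 2 ≤ Real.sqrt (1 - t ^ 2) ^ 2 := by
      rw [Real.sq_sqrt (by nlinarith), hnx]; nlinarith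
    nlinarith [norm_nonneg x, Real.sqrt_nonneg (1 - t ^ 2)]
  · have : Real.sqrt (1 - ‖x‖ ^ 2) = ⟪w, v⟫ := by
      rw [hnx]
      have : 1 - (1 - ⟪w, v⟫ ^ 2) = ⟪w, v⟫ ^ 2 := by ring
      rw [this, Real.sqrt_sq (le_of_lt (lt_trans ht0 hvt'))]
    rw [gmap, this, hxdef]
    simp

lemma sqrt_one_sub_sq_lipschitz {s t a b : ℝ} (hst : s = Real.sqrt (1 - t ^ 2)) (ht0 : 0 < t)
    (ht1 : t < 1) (ha0 : 0 ≤ a) (ha : a ≤ s) (hb0 : 0 ≤ b) (hb : b ≤ s) :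
    |Real.sqrt (1 - a ^ 2) - Real.sqrt (1 - b ^ 2)| ≤ s / t * |a - b| := by
  have hs2 : s ^ 2 = 1 - t ^ 2 := by rw [hst]; exact Real.sq_sqrt (by nlinarith)
  have hs0 : 0 ≤ s := hst ▸ Real.sqrt_nonneg _
  set A := Real.sqrt (1 - a ^ 2) with hA
  set B := Real.sqrt (1 - b ^ 2) with hB
  have hA2 : A ^ 2 = 1 - a ^ 2 := Real.sq_sqrt (by nlinarith)
  have hB2 : B ^ 2 = 1 - b ^ 2 := Real.sq_sqrt (by nlinarith)
  have hAt : t ≤ A := by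
    rw [hA]
    have : t = Real.sqrt (t ^ 2) := (Real.sqrt_sq ht0.le).symm
    rw [this]
    exact Real.sqrt_le_sqrt (by nlinarith)
  have hBt : t ≤ B := by
    rw [hB]
    have : t = Real.sqrt (t ^ 2) := (Real.sqrt_sq ht0.le).symm
    rw [this]
    exact Real.sqrt_le_sqrt (by nlinarith)
  have key : |A - B| * (2 * t) ≤ |a - b| * (2 * s) := by
    have h1 : |A - B| * (A + B) = |a - b| * (a + b) := by
      have e1 : |A - B| * (A + B) = |A ^ 2 - B ^ 2| := by
        rw [← abs_of_nonneg (show (0:ℝ) ≤ A + B by positivity), ← abs_mul]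
        congr 1; ring
      have e2 : |a - b| * (a + b) = |a ^ 2 - b ^ 2| := by
        rw [← abs_of_nonneg (show (0:ℝ) ≤ a + b by positivity), ← abs_mul]
        congr 1; ring
      rw [e1, e2, hA2, hB2, show 1 - a ^ 2 - (1 - b ^ 2) = -(a ^ 2 - b ^ 2) by ring, abs_neg]
    calc |A - B| * (2 * t) ≤ |A - B| * (A + B) := by
          have := abs_nonneg (A - B); nlinarith
    _ = |a - b| * (a + b) := h1
    _ ≤ |a - b| * (2 * s) := by have := abs_nonneg (a - b); nlinarith
  rw [div_mul_eq_mul_div, le_div_iff₀ ht0]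
  nlinarith [abs_nonneg (a - b), abs_nonneg (A - B)]

lemma gmap_lipschitz (hw : ‖w‖ = 1) {t : ℝ} (ht0 : 0 < t) (ht1 : t < 1) :
    LipschitzOnWith (1 + Real.sqrt (1 - t ^ 2) / t).toNNReal (gmap w)
      (closedBall 0 (Real.sqrt (1 - t ^ 2))) := by
  set s := Real.sqrt (1 - t ^ 2) with hs
  apply LipschitzOnWith.of_dist_le_mul
  intro x hx y hy
  rw [mem_closedBall_zero_iff] at hx hy
  have hxy : dist (gmap w x) (gmap w y) ≤ dist x y +
      |Real.sqrt (1 - ‖x‖ ^ 2) - Real.sqrt (1 - ‖y‖ ^ 2)| := by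
    rw [dist_eq_norm, dist_eq_norm, gmap, gmap]
    have : (x : EuclideanSpace ℝ (Fin m)) + Real.sqrt (1 - ‖x‖ ^ 2) • w -
        ((y : EuclideanSpace ℝ (Fin m)) + Real.sqrt (1 - ‖y‖ ^ 2) • w) =
        ((x : EuclideanSpace ℝ (Fin m)) - y) +
          (Real.sqrt (1 - ‖x‖ ^ 2) - Real.sqrt (1 - ‖y‖ ^ 2)) • w := by
      rw [sub_smul]; abel
    rw [this]
    refine (norm_add_le _ _).trans ?_
    rw [norm_smul, Real.norm_eq_abs, hw, mul_one]
    rfl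
  have hlip : |Real.sqrt (1 - ‖x‖ ^ 2) - Real.sqrt (1 - ‖y‖ ^ 2)| ≤ s / t * |‖x‖ - ‖y‖| :=
    sqrt_one_sub_sq_lipschitz hs ht0 ht1 (norm_nonneg _) hx (norm_nonneg _) hy
  have habs : |‖x‖ - ‖y‖| ≤ dist x y := by
    rw [dist_eq_norm]; exact abs_norm_sub_norm_le x y
  have hst : (0:ℝ) ≤ s / t := by positivity
  rw [Real.coe_toNNReal _ (by positivity)]
  calc dist (gmap w x) (gmap w y) ≤ dist x y + s / t * dist x y := by
        refine hxy.trans ?_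
        gcongr
        exact hlip.trans (by nlinarith)
  _ = (1 + s / t) * dist x y := by ring

lemma finrank_cast (hm : 1 ≤ m) (hw : ‖w‖ = 1) :
    ((finrank ℝ ((ℝ ∙ w)ᗮ : Submodule ℝ (EuclideanSpace ℝ (Fin m))) : ℕ) : ℝ) = (m : ℝ) - 1 := by
  have hw0 : w ≠ 0 := by intro h; rw [h, norm_zero] at hw; norm_num at hw
  have h := Submodule.finrank_add_finrank_orthogonal (K := (ℝ ∙ w))
  rw [finrank_span_singleton hw0, finrank_euclideanSpace_fin] at h
  have : finrank ℝ ((ℝ ∙ w)ᗮ : Submodule ℝ (EuclideanSpace ℝ (Fin m))) = m - 1 := by omega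
  rw [this]
  push_cast [Nat.cast_sub hm]
  ring

lemma cap_lt_top (hm : 1 ≤ m) (hw : ‖w‖ = 1) {t : ℝ} (ht0 : 0 < t) (ht1 : t < 1) :
    μH[(m : ℝ) - 1] (cap w t) < ⊤ := by
  have hd0 : (0:ℝ) ≤ (m : ℝ) - 1 := by
    have : (1:ℝ) ≤ (m:ℝ) := by exact_mod_cast hm
    linarith
  calc μH[(m : ℝ) - 1] (cap w t)
      ≤ μH[(m : ℝ) - 1] (gmap w '' (closedBall 0 (Real.sqrt (1 - t ^ 2)))) :=
        measure_mono (cap_subset_image hw ht0 ht1)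
    _ ≤ ((1 + Real.sqrt (1 - t ^ 2) / t).toNNReal : ℝ≥0∞) ^ ((m : ℝ) - 1) *
        μH[(m : ℝ) - 1] (closedBall (0 : ((ℝ ∙ w)ᗮ : Submodule ℝ (EuclideanSpace ℝ (Fin m))))
          (Real.sqrt (1 - t ^ 2))) :=
        (gmap_lipschitz hw ht0 ht1).hausdorffMeasure_image_le hd0
    _ < ⊤ := by
        apply ENNReal.mul_lt_top
        · exact ENNReal.rpow_lt_top_of_nonneg hd0 ENNReal.coe_ne_top
        · rw [← finrank_cast hm hw]
          exact (isCompact_closedBall _ _).measure_lt_top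

lemma proj_lipschitz :
    LipschitzWith 1 (fun v : EuclideanSpace ℝ (Fin m) => (Submodule.orthogonalProjectionOnto (ℝ ∙ w)ᗮ v :
      ((ℝ ∙ w)ᗮ : Submodule ℝ (EuclideanSpace ℝ (Fin m))))) := by
  have := Submodule.orthogonalProjectionOnto_norm_le ((ℝ ∙ w)ᗮ : Submodule ℝ (EuclideanSpace ℝ (Fin m)))
  exact LipschitzWith.weaken ((Submodule.orthogonalProjectionOnto (ℝ ∙ w)ᗮ).lipschitz) (by rw [← NNReal.coe_le_coe]; simpa using this)

lemma proj_gmap (x : ((ℝ ∙ w)ᗮ : Submodule ℝ (EuclideanSpace ℝ (Fin m)))) :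
    Submodule.orthogonalProjectionOnto (ℝ ∙ w)ᗮ (gmap w x) = x := by
  rw [gmap, map_add, ContinuousLinearMap.map_smul, Submodule.orthogonalProjection_mem_subspace_eq_self,
    Submodule.orthogonalProjectionOnto_apply_of_mem_orthogonal
      (Submodule.le_orthogonal_orthogonal _ (Submodule.mem_span_singleton_self w))]
  simp

lemma image_gmap_subset_cap (hw : ‖w‖ = 1) {t : ℝ} (ht0 : 0 < t) (ht1 : t < 1) :
    gmap w '' (ball 0 (Real.sqrt (1 - t ^ 2))) ⊆ cap w t := by
  rintro - ⟨x, hx, rfl⟩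
  rw [mem_ball_zero_iff] at hx
  have hs1 : Real.sqrt (1 - t ^ 2) ≤ 1 := Real.sqrt_le_one.mpr (by nlinarith)
  constructor
  · rw [mem_sphere_zero_iff_norm]
    exact norm_gmap hw x (le_trans hx.le hs1)
  · show t < ⟪w, gmap w x⟫
    rw [inner_gmap hw x]
    have h2 : ‖x‖ ^ 2 < 1 - t ^ 2 := by
      have := Real.sq_sqrt (show (0:ℝ) ≤ 1 - t ^ 2 by nlinarith)
      nlinarith [norm_nonneg x, Real.sqrt_nonneg (1 - t ^ 2)]
    rw [show t = Real.sqrt (t ^ 2) from (Real.sqrt_sq ht0.le).symm]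
    exact Real.sqrt_lt_sqrt (by positivity) (by nlinarith)

lemma cap_pos (hm : 1 ≤ m) (hw : ‖w‖ = 1) {t : ℝ} (ht0 : 0 < t) (ht1 : t < 1) :
    0 < μH[(m : ℝ) - 1] (cap w t) := by
  have hd0 : (0:ℝ) ≤ (m : ℝ) - 1 := by
    have : (1:ℝ) ≤ (m:ℝ) := by exact_mod_cast hm
    linarith
  have hs0 : 0 < Real.sqrt (1 - t ^ 2) := Real.sqrt_pos.2 (by nlinarith)
  have hball : 0 < μH[(m : ℝ) - 1]
      (ball (0 : ((ℝ ∙ w)ᗮ : Submodule ℝ (EuclideanSpace ℝ (Fin m)))) (Real.sqrt (1 - t ^ 2))) := by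
    rw [← finrank_cast hm hw]
    exact measure_ball_pos _ _ hs0
  have himg : (fun v : EuclideanSpace ℝ (Fin m) => (Submodule.orthogonalProjectionOnto (ℝ ∙ w)ᗮ v :
        ((ℝ ∙ w)ᗮ : Submodule ℝ (EuclideanSpace ℝ (Fin m))))) ''
        (gmap w '' (ball 0 (Real.sqrt (1 - t ^ 2)))) = ball 0 (Real.sqrt (1 - t ^ 2)) := by
    rw [← image_comp]
    have : ((fun v : EuclideanSpace ℝ (Fin m) => (Submodule.orthogonalProjectionOnto (ℝ ∙ w)ᗮ v :
        ((ℝ ∙ w)ᗮ : Submodule ℝ (EuclideanSpace ℝ (Fin m))))) ∘ (gmap w)) = id := by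
      funext x; simp only [Function.comp_apply, id_eq, proj_gmap]
    rw [this, image_id]
  have key := (proj_lipschitz (w := w)).hausdorffMeasure_image_le hd0
      (gmap w '' (ball 0 (Real.sqrt (1 - t ^ 2))))
  rw [himg] at key
  simp only [ENNReal.coe_one, ENNReal.one_rpow, one_mul] at key
  calc (0 : ℝ≥0∞) < _ := hball
    _ ≤ μH[(m : ℝ) - 1] (gmap w '' (ball 0 (Real.sqrt (1 - t ^ 2)))) := key
    _ ≤ μH[(m : ℝ) - 1] (cap w t) := measure_mono (image_gmap_subset_cap hw ht0 ht1)

end graph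

lemma sphere_lt_top (hm : 1 ≤ m) : μH[(m : ℝ) - 1] (sphere (0 : EuclideanSpace ℝ (Fin m)) 1) < ⊤ := by
  have hcov : sphere (0 : EuclideanSpace ℝ (Fin m)) 1 ⊆
      ⋃ v : sphere (0 : EuclideanSpace ℝ (Fin m)) 1,
        {x : EuclideanSpace ℝ (Fin m) | (1:ℝ)/2 < ⟪(v : EuclideanSpace ℝ (Fin m)), x⟫} := by
    intro v hv
    refine mem_iUnion.2 ⟨⟨v, hv⟩, ?_⟩
    show (1:ℝ)/2 < ⟪v, v⟫
    rw [real_inner_self_eq_norm_mul_norm, mem_sphere_zero_iff_norm.1 hv]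
    norm_num
  obtain ⟨T, hT⟩ := (isCompact_sphere (0 : EuclideanSpace ℝ (Fin m)) 1).elim_finite_subcover
    (fun v : sphere (0 : EuclideanSpace ℝ (Fin m)) 1 =>
      {x : EuclideanSpace ℝ (Fin m) | (1:ℝ)/2 < ⟪(v : EuclideanSpace ℝ (Fin m)), x⟫})
    (fun v => isOpen_lt continuous_const (continuous_const.inner continuous_id)) hcov
  calc μH[(m : ℝ) - 1] (sphere (0 : EuclideanSpace ℝ (Fin m)) 1)
      ≤ μH[(m : ℝ) - 1] (⋃ v ∈ T, cap (v : EuclideanSpace ℝ (Fin m)) (1/2)) := by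
        apply measure_mono
        intro x hx
        obtain ⟨v, hvT, hv⟩ : ∃ v ∈ T, (1:ℝ)/2 < ⟪(v : EuclideanSpace ℝ (Fin m)), x⟫ := by
          have := hT hx
          simpa using this
        exact mem_biUnion hvT ⟨hx, hv⟩
    _ ≤ ∑ v ∈ T, μH[(m : ℝ) - 1] (cap (v : EuclideanSpace ℝ (Fin m)) (1/2)) :=
        measure_biUnion_finset_le T _
    _ < ⊤ := by
        refine ENNReal.sum_lt_top.mpr fun v _ => cap_lt_top hm (mem_sphere_zero_iff_norm.1 v.2)
          (by norm_num) (by norm_num)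

section integrals

lemma isFiniteMeasure_restrict_sphere (hm : 1 ≤ m) :
    IsFiniteMeasure ((μH[(m : ℝ) - 1] :
      Measure (EuclideanSpace ℝ (Fin m))).restrict (sphere 0 1)) :=
  ⟨by rw [Measure.restrict_apply_univ]; exact sphere_lt_top hm⟩

lemma integrableOn_subset_sphere (hm : 1 ≤ m) {G : Type*} [NormedAddCommGroup G]
    [NormedSpace ℝ G] {f : EuclideanSpace ℝ (Fin m) → G} (hf : Continuous f)
    {A : Set (EuclideanSpace ℝ (Fin m))} (hA : A ⊆ sphere 0 1) :
    IntegrableOn f A (μH[(m : ℝ) - 1]) := by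
  refine IntegrableOn.mono_set ?_ hA
  haveI := isFiniteMeasure_restrict_sphere hm
  obtain ⟨C, hC⟩ := (isCompact_sphere (0 : EuclideanSpace ℝ (Fin m)) 1).exists_bound_of_continuousOn
    hf.continuousOn
  refine Integrable.mono' (integrable_const C) hf.aestronglyMeasurable ?_
  exact (ae_restrict_iff' isClosed_sphere.measurableSet).2 (ae_of_all _ hC)

lemma setIntegral_lie {G : Type*} [NormedAddCommGroup G] [NormedSpace ℝ G]
    (R : (EuclideanSpace ℝ (Fin m)) ≃ₗᵢ[ℝ] (EuclideanSpace ℝ (Fin m)))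
    (f : EuclideanSpace ℝ (Fin m) → G) (A : Set (EuclideanSpace ℝ (Fin m))) :
    ∫ v in R '' A, f v ∂(μH[(m : ℝ) - 1]) = ∫ v in A, f (R v) ∂(μH[(m : ℝ) - 1]) :=
  (R.toIsometryEquiv.measurePreserving_hausdorffMeasure _).setIntegral_image_emb
    R.toHomeomorph.measurableEmbedding f A

lemma image_lie_sphere (R : (EuclideanSpace ℝ (Fin m)) ≃ₗᵢ[ℝ] (EuclideanSpace ℝ (Fin m))) :
    R '' (sphere 0 1) = sphere 0 1 := by
  ext v
  constructor
  · rintro ⟨x, hx, rfl⟩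
    rw [mem_sphere_zero_iff_norm] at hx ⊢
    rw [R.norm_map, hx]
  · intro hv
    refine ⟨R.symm v, ?_, by simp⟩
    rw [mem_sphere_zero_iff_norm] at hv ⊢
    rw [R.symm.norm_map, hv]

lemma integral_id_sphere_zero :
    ∫ v in sphere (0 : EuclideanSpace ℝ (Fin m)) 1, v ∂(μH[(m : ℝ) - 1]) = 0 := by
  set R := LinearIsometryEquiv.neg ℝ (E := EuclideanSpace ℝ (Fin m)) with hR
  have h := setIntegral_lie R (fun v => v) (sphere 0 1)
  rw [image_lie_sphere R] at h
  have h2 : ∀ v, R v = -v := fun v => rfl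
  simp only [h2] at h
  rw [integral_neg] at h
  set I := ∫ v in sphere (0 : EuclideanSpace ℝ (Fin m)) 1, v ∂(μH[(m : ℝ) - 1])
  have hII : I + I = 0 := by nth_rewrite 1 [h]; abel
  have h3 : (2 : ℝ) • I = 0 := by rw [two_smul]; exact hII
  rcases smul_eq_zero.mp h3 with h4 | h4
  · norm_num at h4
  · exact h4

variable {u u₁ u₂ : EuclideanSpace ℝ (Fin m)}

lemma image_cap (R : (EuclideanSpace ℝ (Fin m)) ≃ₗᵢ[ℝ] (EuclideanSpace ℝ (Fin m)))
    (hR : R u₁ = u₂) (t : ℝ) : R '' (cap u₁ t) = cap u₂ t := by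
  have hmem : ∀ v, R v ∈ cap u₂ t ↔ v ∈ cap u₁ t := by
    intro v
    simp only [cap, mem_inter_iff, mem_sphere_zero_iff_norm, mem_setOf_eq, R.norm_map]
    rw [← hR, LinearIsometryEquiv.inner_map_map]
  ext v
  constructor
  · rintro ⟨x, hx, rfl⟩; exact (hmem x).2 hx
  · intro hv
    refine ⟨R.symm v, ?_, LinearIsometryEquiv.apply_symm_apply R v⟩
    have h := hmem (R.symm v)
    rw [LinearIsometryEquiv.apply_symm_apply] at h
    exact h.1 hv

lemma integral_cap_eq (hm : 1 ≤ m) (hu : ‖u‖ = 1) {t : ℝ} (ht0 : 0 < t) (ht1 : t < 1) :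
    ∫ v in cap u t, v ∂(μH[(m : ℝ) - 1]) =
      (∫ v in cap u t, ⟪u, v⟫ ∂(μH[(m : ℝ) - 1])) • u := by
  set I := ∫ v in cap u t, v ∂(μH[(m : ℝ) - 1]) with hI
  have hint : IntegrableOn (fun v : EuclideanSpace ℝ (Fin m) => v) (cap u t) (μH[(m : ℝ) - 1]) :=
    integrableOn_subset_sphere hm continuous_id (cap_subset_sphere u t)
  have hproj : ∀ w : EuclideanSpace ℝ (Fin m), ⟪w, I⟫ = ∫ v in cap u t, ⟪w, v⟫ ∂(μH[(m : ℝ) - 1]) := by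
    intro w
    exact ((innerSL ℝ w).integral_comp_comm hint).symm
  have hIw : ∀ w : EuclideanSpace ℝ (Fin m), ⟪w, u⟫ = 0 → ⟪w, I⟫ = 0 := by
    intro w hw
    rcases eq_or_ne w 0 with rfl | hw0
    · simp
    set e := ‖w‖⁻¹ • w with he
    have hew : ⟪e, u⟫ = 0 := by rw [he, real_inner_smul_left, hw, mul_zero]
    set R := Submodule.reflection (ℝ ∙ e)ᗮ with hRdef
    have hRe : R e = -e :=
      Submodule.reflection_mem_subspace_orthogonalComplement_eq_neg
        (Submodule.le_orthogonal_orthogonal _ (Submodule.mem_span_singleton_self e))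
    have hRu : R u = u :=
      Submodule.reflection_mem_subspace_eq_self
        (Submodule.mem_orthogonal_singleton_iff_inner_right.2 hew)
    have hcap := image_cap (u₁ := u) (u₂ := u) R hRu t
    have h := setIntegral_lie R (fun v => v) (cap u t)
    rw [hcap] at h
    -- h : I = ∫ v in cap u t, R v
    have h2 : ∫ v in cap u t, R v ∂(μH[(m : ℝ) - 1]) = R I := by
      exact ((R.toLinearIsometry.toContinuousLinearMap).integral_comp_comm hint)
    have hRI : R I = I := by rw [← h2, ← h]
    have : ⟪e, I⟫ = 0 := by
      have h3 : ⟪e, I⟫ = ⟪R e, R I⟫ := by rw [LinearIsometryEquiv.inner_map_map]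
      rw [hRe, hRI, inner_neg_left] at h3
      linarith
    rw [he, real_inner_smul_left] at this
    rcases mul_eq_zero.mp this with h4 | h4
    · exact absurd (inv_eq_zero.mp h4) (norm_ne_zero_iff.2 hw0)
    · exact h4
  have hkey : I - ⟪u, I⟫ • u = 0 := by
    set w := I - ⟪u, I⟫ • u with hwdef
    have hwu : ⟪w, u⟫ = 0 := by
      rw [hwdef, inner_sub_left, inner_smul_left, real_inner_self_eq_norm_mul_norm, hu,
        real_inner_comm]
      simp
    have h5 : ⟪w, I⟫ = 0 := hIw w hwu
    have h6 : ⟪w, w⟫ = 0 := by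
      rw [hwdef, inner_sub_right, h5, real_inner_smul_right, hwu]
      ring
    exact inner_self_eq_zero.mp h6
  have := sub_eq_zero.mp hkey
  rw [hI] at this ⊢
  rw [this, hproj u]

lemma integral_cap_swap (hm : 1 ≤ m) (hu₁ : ‖u₁‖ = 1) (hu₂ : ‖u₂‖ = 1) {t : ℝ}
    (ht0 : 0 < t) (ht1 : t < 1) :
    ∫ v in cap u₂ t, v ∂(μH[(m : ℝ) - 1]) =
      (Submodule.reflection (ℝ ∙ (u₁ - u₂))ᗮ) (∫ v in cap u₁ t, v ∂(μH[(m : ℝ) - 1])) := by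
  set R := Submodule.reflection (ℝ ∙ (u₁ - u₂))ᗮ with hRdef
  have hR12 : R u₁ = u₂ := Submodule.reflection_sub (by rw [hu₁, hu₂])
  have hR21 : R u₂ = u₁ := by rw [← hR12, Submodule.reflection_reflection]
  have hint : IntegrableOn (fun v : EuclideanSpace ℝ (Fin m) => v) (cap u₁ t) (μH[(m : ℝ) - 1]) :=
    integrableOn_subset_sphere hm continuous_id (cap_subset_sphere _ t)
  have hcap : R '' (cap u₁ t) = cap u₂ t := image_cap R hR12 t
  rw [← hcap, setIntegral_lie R (fun v => v) (cap u₁ t)]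
  exact ((R.toLinearIsometry.toContinuousLinearMap).integral_comp_comm hint)

lemma integral_inner_cap_pos (hm : 1 ≤ m) (hu : ‖u‖ = 1) {t : ℝ} (ht0 : 0 < t) (ht1 : t < 1) :
    0 < ∫ v in cap u t, ⟪u, v⟫ ∂(μH[(m : ℝ) - 1]) := by
  have hmeas := measurableSet_cap u t
  have hfin := (cap_lt_top hm hu ht0 ht1)
  have hpos := cap_pos hm hu ht0 ht1
  have hint : IntegrableOn (fun v : EuclideanSpace ℝ (Fin m) => (⟪u, v⟫ : ℝ)) (cap u t)
      (μH[(m : ℝ) - 1]) :=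
    integrableOn_subset_sphere hm (continuous_const.inner continuous_id) (cap_subset_sphere u t)
  have hlb : ∀ v ∈ cap u t, t ≤ ⟪u, v⟫ := fun v hv => le_of_lt hv.2
  have := setIntegral_ge_of_const_le hmeas (ne_of_lt hfin) hlb hint
  have htm : 0 < (μH[(m : ℝ) - 1] (cap u t)).toReal :=
    ENNReal.toReal_pos (ne_of_gt hpos) (ne_of_lt hfin)
  rw [measureReal_def, smul_eq_mul] at this
  nlinarith

end integrals


end BalanceAux

namespace BalanceGeo


variable {m : ℕ} {Ω : Set (EuclideanSpace ℝ (Fin m))} {r : ℝ}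
variable {u : EuclideanSpace ℝ (Fin m)}

/-- supporting property of the contact direction -/
lemma support_le (hconv : Convex ℝ Ω) (hr : 0 < r)
    (hball : closedBall (0 : EuclideanSpace ℝ (Fin m)) r ⊆ Ω)
    (hu : ‖u‖ = 1) (hfront : r • u ∈ frontier Ω) :
    ∀ x ∈ Ω, ⟪u, x⟫ ≤ r := by
  by_contra hcon
  push_neg at hcon
  obtain ⟨x, hxΩ, hx⟩ := hcon
  set p := r • u with hp
  have hpu : ⟪p, x⟫ = r * ⟪u, x⟫ := real_inner_smul_left u x r
  have hpx : r ^ 2 < ⟪p, x⟫ := by rw [hpu]; nlinarith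
  set A := ‖x‖ ^ 2 - r ^ 2 with hA
  set B := 2 * (⟪p, x⟫ - r ^ 2) with hB
  have hB0 : 0 < B := by rw [hB]; nlinarith
  set s := min (1/2 : ℝ) (B / (2 * (|A| + 1))) with hs
  have habs : 0 ≤ |A| := abs_nonneg A
  have hs0 : 0 < s := by
    apply lt_min (by norm_num)
    positivity
  have hs12 : s ≤ 1/2 := min_le_left _ _
  have hsA : s * A < B := by
    have h1 : s * A ≤ s * |A| := by nlinarith [le_abs_self A, hs0.le]
    have h2 : s ≤ B / (2 * (|A| + 1)) := min_le_right _ _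
    have h3 : s * |A| ≤ B / (2 * (|A| + 1)) * |A| := by nlinarith
    have h4 : B / (2 * (|A| + 1)) * |A| ≤ B / 2 := by
      rw [div_mul_eq_mul_div, div_le_div_iff₀ (by positivity) (by norm_num)]
      nlinarith
    linarith
  have hnp : ‖p‖ = r := by
    rw [hp, norm_smul, Real.norm_eq_abs, abs_of_pos hr, hu, mul_one]
  have hdist : ‖p - s • x‖ < (1 - s) * r := by
    have hrhs : 0 < (1 - s) * r := by nlinarith
    have hns : ‖s • x‖ ^ 2 = s ^ 2 * ‖x‖ ^ 2 := by
      rw [norm_smul, Real.norm_eq_abs, mul_pow, sq_abs]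
    have hsq : ‖p - s • x‖ ^ 2 < ((1 - s) * r) ^ 2 := by
      rw [norm_sub_sq_real, real_inner_smul_right, hns, hnp]
      nlinarith [sq_nonneg s, hs0]
    exact lt_of_pow_lt_pow_left₀ 2 hrhs.le hsq
  have hsub : ball (s • x) ((1 - s) * r) ⊆ Ω := by
    intro z hz
    rw [mem_ball, dist_eq_norm] at hz
    set y := (1 - s)⁻¹ • (z - s • x) with hy
    have h1s : (0:ℝ) < 1 - s := by linarith
    have hyΩ : y ∈ Ω := by
      apply hball
      rw [mem_closedBall_zero_iff, hy, norm_smul, Real.norm_eq_abs, abs_of_pos (by positivity)]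
      rw [inv_mul_le_iff₀ h1s]
      exact le_of_lt hz
    have hzeq : z = s • x + (1 - s) • y := by
      rw [hy, smul_inv_smul₀ (ne_of_gt h1s)]
      abel
    rw [hzeq]
    exact hconv hxΩ hyΩ hs0.le h1s.le (by ring)
  have hpint : p ∈ interior Ω :=
    mem_interior.2 ⟨ball (s • x) ((1 - s) * r), hsub, isOpen_ball, by
      rw [mem_ball, dist_eq_norm]; exact hdist⟩
  rw [← closure_diff_interior] at hfront
  exact hfront.2 hpint

/-- uniqueness of the unit normal at a contact point -/
lemma normal_unique (hr : 0 < r)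
    (hball : closedBall (0 : EuclideanSpace ℝ (Fin m)) r ⊆ Ω)
    (hu : ‖u‖ = 1) {a : EuclideanSpace ℝ (Fin m)} (ha : ‖a‖ = 1)
    (hsup : ∀ x ∈ Ω, ⟪a, x⟫ ≤ ⟪a, r • u⟫) : a = u := by
  have hra : r • a ∈ Ω := hball (by
    rw [mem_closedBall_zero_iff, norm_smul, Real.norm_eq_abs, abs_of_pos hr, ha, mul_one])
  have h1 := hsup (r • a) hra
  rw [real_inner_smul_right, real_inner_smul_right, real_inner_self_eq_norm_mul_norm, ha] at h1
  have hau : 1 ≤ ⟪a, u⟫ := by nlinarith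
  have hcs : ⟪a, u⟫ ≤ 1 := by
    have := real_inner_le_norm a u
    rw [ha, hu] at this; linarith
  have heq : ⟪a, u⟫ = ‖a‖ * ‖u‖ := by rw [ha, hu]; linarith
  have := inner_eq_norm_mul_iff_real.mp heq
  rw [ha, hu, one_smul, one_smul] at this
  exact this

/-- face decomposition: the contact point lies in the hull of the points of `S`
lying on the supporting hyperplane -/
lemma face_hull {S : Finset (EuclideanSpace ℝ (Fin m))}
    (hΩ : Ω = convexHull ℝ (S : Set (EuclideanSpace ℝ (Fin m))))
    (hsup : ∀ x ∈ Ω, ⟪u, x⟫ ≤ r) (hpΩ : r • u ∈ Ω) (hu : ‖u‖ = 1) :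
    ∃ F : Finset (EuclideanSpace ℝ (Fin m)), F ⊆ S ∧ (∀ s ∈ F, ⟪u, s⟫ = r) ∧
      (∀ s ∈ S, s ∉ F → ⟪u, s⟫ < r) ∧
      r • u ∈ convexHull ℝ (F : Set (EuclideanSpace ℝ (Fin m))) ∧ F.Nonempty := by
  classical
  set p := r • u with hp
  have hpS : p ∈ convexHull ℝ (S : Set (EuclideanSpace ℝ (Fin m))) := hΩ ▸ hpΩ
  rw [Finset.convexHull_eq] at hpS
  obtain ⟨w, hwnn, hwsum, hwc⟩ := hpS
  rw [Finset.centerMass_eq_of_sum_1 _ _ hwsum] at hwc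
  set F := S.filter (fun s => ⟪u, s⟫ = r) with hF
  have hFS : F ⊆ S := Finset.filter_subset _ _
  have hFeq : ∀ s ∈ F, ⟪u, s⟫ = r := fun s hs => (Finset.mem_filter.1 hs).2
  have hSle : ∀ s ∈ S, ⟪u, s⟫ ≤ r := by
    intro s hs
    exact hsup s (hΩ ▸ subset_convexHull ℝ (S : Set (EuclideanSpace ℝ (Fin m))) hs)
  have hFlt : ∀ s ∈ S, s ∉ F → ⟪u, s⟫ < r := by
    intro s hs hsF
    rcases lt_or_eq_of_le (hSle s hs) with h | h
    · exact h
    · exact absurd (Finset.mem_filter.2 ⟨hs, h⟩) hsF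
  have hip : ⟪u, p⟫ = r := by
    rw [hp, real_inner_smul_right, real_inner_self_eq_norm_mul_norm, hu]; ring
  have hzero : ∀ s ∈ S, s ∉ F → w s = 0 := by
    intro s hs hsF
    by_contra hws
    have hws0 : 0 < w s := lt_of_le_of_ne (hwnn s hs) (Ne.symm hws)
    have hsum0 : ∑ y ∈ S, w y * (r - ⟪u, y⟫) = 0 := by
      have h1 : ∑ y ∈ S, w y * (r - ⟪u, y⟫) = r * (∑ y ∈ S, w y) - ∑ y ∈ S, w y * ⟪u, y⟫ := by
        rw [Finset.mul_sum, ← Finset.sum_sub_distrib]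
        congr 1; funext y; ring
      have h2 : ∑ y ∈ S, w y * ⟪u, y⟫ = ⟪u, p⟫ := by
        rw [← hwc, inner_sum]
        congr 1; funext y
        rw [real_inner_smul_right, id]
      rw [h1, h2, hwsum, hip]; ring
    have hnonneg : ∀ y ∈ S, 0 ≤ w y * (r - ⟪u, y⟫) := by
      intro y hy
      have := hSle y hy
      have := hwnn y hy
      nlinarith
    have := (Finset.sum_eq_zero_iff_of_nonneg hnonneg).1 hsum0 s hs
    have hlt := hFlt s hs hsF
    nlinarith
  have hsumF : ∑ y ∈ F, w y = 1 := by
    rw [← hwsum]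
    apply Finset.sum_subset hFS
    intro y hy hyF
    exact hzero y hy hyF
  have hptF : p = ∑ y ∈ F, w y • y := by
    rw [← hwc]
    apply (Finset.sum_subset hFS _).symm
    intro y hy hyF
    rw [hzero y hy hyF, zero_smul]
  have hFne : F.Nonempty := by
    by_contra h
    rw [Finset.not_nonempty_iff_eq_empty] at h
    rw [h, Finset.sum_empty] at hsumF
    norm_num at hsumF
  refine ⟨F, hFS, hFeq, hFlt, ?_, hFne⟩
  have := Finset.centerMass_mem_convexHull F (fun y hy => hwnn y (hFS hy))
    (by rw [hsumF]; norm_num) (fun y hy => Finset.mem_coe.2 hy)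
  rw [Finset.centerMass_eq_of_sum_1 _ _ hsumF] at this
  simpa [← hptF] using this

lemma relint_face (hconv : Convex ℝ Ω) (hr : 0 < r)
    (hball : closedBall (0 : EuclideanSpace ℝ (Fin m)) r ⊆ Ω)
    {S : Finset (EuclideanSpace ℝ (Fin m))}
    (hΩ : Ω = convexHull ℝ (S : Set (EuclideanSpace ℝ (Fin m))))
    (hu : ‖u‖ = 1) (hfront : r • u ∈ frontier Ω) :
    ∃ ρ > 0, ∀ x, ⟪u, x⟫ = r → ‖x - r • u‖ < ρ → x ∈ Ω := by
  classical
  have hcomp : IsCompact Ω := hΩ ▸ S.finite_toSet.isCompact_convexHull ℝ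
  have hclosed : IsClosed Ω := hcomp.isClosed
  have hpΩ : r • u ∈ Ω := by
    have := hfront.1
    rwa [hclosed.closure_eq] at this
  set p := r • u with hp
  have hsup := support_le hconv hr hball hu hfront
  obtain ⟨F, hFS, hFeq, hFlt, hpF, hFne⟩ := face_hull hΩ hsup hpΩ hu
  by_contra hcon
  push_neg at hcon
  have hseq : ∀ n : ℕ, ∃ x, ⟪u, x⟫ = r ∧ ‖x - p‖ < 1 / (n + 1) ∧ x ∉ Ω := by
    intro n
    obtain ⟨x, h1, h2, h3⟩ := hcon (1 / (n + 1)) (by positivity)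
    exact ⟨x, h1, h2, h3⟩
  choose xs hxs1 hxs2 hxs3 using hseq
  have hFclosed : IsClosed (convexHull ℝ (F : Set (EuclideanSpace ℝ (Fin m)))) :=
    (F.finite_toSet.isCompact_convexHull ℝ).isClosed
  have hFconv : Convex ℝ (convexHull ℝ (F : Set (EuclideanSpace ℝ (Fin m)))) :=
    convex_convexHull _ _
  have hFsubΩ : convexHull ℝ (F : Set (EuclideanSpace ℝ (Fin m))) ⊆ Ω := by
    rw [hΩ]
    exact convexHull_mono (Finset.coe_subset.2 hFS)
  have hsep : ∀ n : ℕ, ∃ wv : EuclideanSpace ℝ (Fin m),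
      ∀ s ∈ F, ⟪wv, s⟫ < ⟪wv, xs n⟫ := by
    intro n
    have hnot : xs n ∉ convexHull ℝ (F : Set (EuclideanSpace ℝ (Fin m))) :=
      fun h => hxs3 n (hFsubΩ h)
    obtain ⟨f, c, hfc, hcx⟩ := geometric_hahn_banach_closed_point hFconv hFclosed hnot
    refine ⟨(InnerProductSpace.toDual ℝ (EuclideanSpace ℝ (Fin m))).symm f, fun s hs => ?_⟩
    rw [InnerProductSpace.toDual_symm_apply, InnerProductSpace.toDual_symm_apply]
    exact lt_trans (hfc s (subset_convexHull ℝ _ (Finset.mem_coe.2 hs))) hcx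
  choose wv hwv using hsep
  set w' : ℕ → EuclideanSpace ℝ (Fin m) := fun n => wv n - ⟪u, wv n⟫ • u with hw'
  have hw'inner : ∀ n (y : EuclideanSpace ℝ (Fin m)),
      ⟪w' n, y⟫ = ⟪wv n, y⟫ - ⟪u, wv n⟫ * ⟪u, y⟫ := by
    intro n y
    rw [hw']
    simp only [inner_sub_left, real_inner_smul_left]
  have hw'lt : ∀ n, ∀ s ∈ F, ⟪w' n, s - p⟫ < ⟪w' n, xs n - p⟫ := by
    intro n s hs
    rw [inner_sub_right, inner_sub_right]
    have h1 := hw'inner n s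
    have h2 := hw'inner n (xs n)
    have h3 := hwv n s hs
    have h4 := hFeq s hs
    have h5 := hxs1 n
    rw [h1, h2, h4, h5]
    linarith
  have hw'ne : ∀ n, w' n ≠ 0 := by
    intro n hzero
    obtain ⟨s₀, hs₀⟩ := hFne
    have := hw'lt n s₀ hs₀
    rw [hzero] at this
    simp at this
  set wh : ℕ → EuclideanSpace ℝ (Fin m) := fun n => ‖w' n‖⁻¹ • w' n with hwh
  have hwhnorm : ∀ n, ‖wh n‖ = 1 := fun n => norm_smul_inv_norm (hw'ne n)
  have hwhsphere : ∀ n, wh n ∈ sphere (0 : EuclideanSpace ℝ (Fin m)) 1 := by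
    intro n; rw [mem_sphere_zero_iff_norm]; exact hwhnorm n
  have hwhu : ∀ n, ⟪u, wh n⟫ = 0 := by
    intro n
    rw [hwh]
    rw [real_inner_smul_right, hw', inner_sub_right, real_inner_smul_right,
      real_inner_self_eq_norm_mul_norm, hu]
    ring
  have hwhlt : ∀ n, ∀ s ∈ F, ⟪wh n, s - p⟫ < ⟪wh n, xs n - p⟫ := by
    intro n s hs
    rw [hwh, real_inner_smul_left, real_inner_smul_left]
    have hpos : (0:ℝ) < ‖w' n‖⁻¹ := by
      rw [inv_pos, norm_pos_iff]; exact hw'ne n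
    exact mul_lt_mul_of_pos_left (hw'lt n s hs) hpos
  have hwhb : ∀ n, ∀ s ∈ F, ⟪wh n, s - p⟫ < 1 / (n + 1) := by
    intro n s hs
    have h1 := hwhlt n s hs
    have h2 : ⟪wh n, xs n - p⟫ ≤ ‖xs n - p‖ := by
      have := real_inner_le_norm (wh n) (xs n - p)
      rwa [hwhnorm n, one_mul] at this
    have h3 := hxs2 n
    linarith
  obtain ⟨wl, hwlsphere, φ, hφ, htend⟩ :=
    (isCompact_sphere (0 : EuclideanSpace ℝ (Fin m)) 1).tendsto_subseq hwhsphere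
  have hwlnorm : ‖wl‖ = 1 := mem_sphere_zero_iff_norm.1 hwlsphere
  have hwlu : ⟪u, wl⟫ = 0 := by
    have hcont : Continuous fun v : EuclideanSpace ℝ (Fin m) => (⟪u, v⟫ : ℝ) :=
      continuous_const.inner continuous_id
    have h1 : Filter.Tendsto (fun n => (⟪u, wh (φ n)⟫ : ℝ)) Filter.atTop (nhds ⟪u, wl⟫) :=
      (hcont.tendsto wl).comp htend
    have h2 : (fun n => (⟪u, wh (φ n)⟫ : ℝ)) = fun _ => 0 := funext fun n => hwhu (φ n)
    rw [h2] at h1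
    exact (tendsto_nhds_unique tendsto_const_nhds h1).symm
  have hwls : ∀ s ∈ F, ⟪wl, s - p⟫ ≤ 0 := by
    intro s hs
    have hcont : Continuous fun v : EuclideanSpace ℝ (Fin m) => (⟪v, s - p⟫ : ℝ) := by
      have : (fun v : EuclideanSpace ℝ (Fin m) => (⟪v, s - p⟫ : ℝ)) =
          fun v => ⟪s - p, v⟫ := funext fun v => real_inner_comm _ _
      rw [this]
      exact continuous_const.inner continuous_id
    have h1 : Filter.Tendsto (fun n => (⟪wh (φ n), s - p⟫ : ℝ)) Filter.atTop
        (nhds ⟪wl, s - p⟫) := (hcont.tendsto wl).comp htend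
    have h2 : Filter.Tendsto (fun n : ℕ => 1 / ((n : ℝ) + 1)) Filter.atTop (nhds 0) :=
      tendsto_one_div_add_atTop_nhds_zero_nat
    refine le_of_tendsto_of_tendsto' h1 h2 fun n => ?_
    have h3 := hwhb (φ n) s hs
    have h4 : (1 : ℝ) / (φ n + 1) ≤ 1 / (n + 1) := by
      apply one_div_le_one_div_of_le (by positivity)
      have h5 : n ≤ φ n := hφ.le_apply
      push_cast
      linarith [(Nat.cast_le (α := ℝ)).2 h5]
    linarith
  -- construct the tilted supporting direction
  have hSne : S.Nonempty := ⟨hFne.choose, hFS hFne.choose_spec⟩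
  set Dm := S.sup' hSne (fun s => ‖s - p‖) with hDm
  have hDmle : ∀ s ∈ S, ‖s - p‖ ≤ Dm := fun s hs => Finset.le_sup' (fun s => ‖s - p‖) hs
  have hDm0 : 0 ≤ Dm := le_trans (norm_nonneg _) (hDmle _ (hFS hFne.choose_spec))
  have hθ : ∃ θ : ℝ, 0 < θ ∧ ∀ s ∈ S, ⟪u + θ • wl, s - p⟫ ≤ 0 := by
    by_cases hG : (S \ F).Nonempty
    · set γ := (S \ F).inf' hG (fun s => r - ⟪u, s⟫) with hγ
      have hγ0 : 0 < γ := by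
        rw [hγ, Finset.lt_inf'_iff]
        intro s hs
        rw [Finset.mem_sdiff] at hs
        have := hFlt s hs.1 hs.2
        linarith
      refine ⟨γ / (Dm + 1), by positivity, fun s hs => ?_⟩
      rw [inner_add_left, real_inner_smul_left]
      by_cases hsF : s ∈ F
      · have h1 : ⟪u, s - p⟫ = 0 := by
          rw [inner_sub_right, hFeq s hsF, hp, real_inner_smul_right,
            real_inner_self_eq_norm_mul_norm, hu]
          ring
        have h2 := hwls s hsF
        have : (0:ℝ) < γ / (Dm + 1) := by positivity
        nlinarith
      · have h1 : ⟪u, s - p⟫ = ⟪u, s⟫ - r := by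
          rw [inner_sub_right, hp, real_inner_smul_right,
            real_inner_self_eq_norm_mul_norm, hu]
          ring
        have h2 : γ ≤ r - ⟪u, s⟫ := by
          rw [hγ]
          exact Finset.inf'_le _ (Finset.mem_sdiff.2 ⟨hs, hsF⟩)
        have h3 : ⟪wl, s - p⟫ ≤ Dm := by
          have := real_inner_le_norm wl (s - p)
          rw [hwlnorm, one_mul] at this
          exact le_trans this (hDmle s hs)
        have h4 : γ / (Dm + 1) * Dm ≤ γ := by
          rw [div_mul_eq_mul_div, div_le_iff₀ (by positivity)]
          nlinarith
        have h5 : γ / (Dm + 1) * ⟪wl, s - p⟫ ≤ γ / (Dm + 1) * Dm := by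
          apply mul_le_mul_of_nonneg_left h3 (by positivity)
        rw [h1]
        linarith
    · refine ⟨1, one_pos, fun s hs => ?_⟩
      have hsF : s ∈ F := by
        by_contra h
        exact hG ⟨s, Finset.mem_sdiff.2 ⟨hs, h⟩⟩
      rw [inner_add_left]
      have h1 : ⟪u, s - p⟫ = 0 := by
        rw [inner_sub_right, hFeq s hsF, hp, real_inner_smul_right,
          real_inner_self_eq_norm_mul_norm, hu]
        ring
      have h2 := hwls s hsF
      rw [real_inner_smul_left]
      nlinarith
  obtain ⟨θ, hθ0, hθP⟩ := hθ
  set a := u + θ • wl with ha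
  have hua : ⟪u, a⟫ = 1 := by
    rw [ha, inner_add_right, real_inner_smul_right, hwlu,
      real_inner_self_eq_norm_mul_norm, hu]
    ring
  have ha0 : a ≠ 0 := by
    intro h
    rw [h, inner_zero_right] at hua
    norm_num at hua
  have hsupΩ : ∀ x ∈ Ω, ⟪a, x⟫ ≤ ⟪a, p⟫ := by
    have hhalf : Convex ℝ {x : EuclideanSpace ℝ (Fin m) | ⟪a, x⟫ ≤ ⟪a, p⟫} :=
      convex_halfSpace_le ⟨fun x y => inner_add_right a x y,
        fun c x => real_inner_smul_right a x c⟩ _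
    have hsub : (S : Set (EuclideanSpace ℝ (Fin m))) ⊆
        {x : EuclideanSpace ℝ (Fin m) | ⟪a, x⟫ ≤ ⟪a, p⟫} := by
      intro s hs
      have := hθP s (Finset.mem_coe.1 hs)
      rw [ha]
      rw [inner_sub_right] at this
      simpa using this
    intro x hx
    have := convexHull_min hsub hhalf
    rw [← hΩ] at this
    exact this hx
  set ah := ‖a‖⁻¹ • a with hah
  have hahnorm : ‖ah‖ = 1 := norm_smul_inv_norm ha0
  have hsupah : ∀ x ∈ Ω, ⟪ah, x⟫ ≤ ⟪ah, p⟫ := by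
    intro x hx
    rw [hah, real_inner_smul_left, real_inner_smul_left]
    exact mul_le_mul_of_nonneg_left (hsupΩ x hx) (by positivity)
  have haheq : ah = u := normal_unique hr hball hu hahnorm (hp ▸ hsupah)
  have hwlu2 : ⟪wl, u⟫ = 0 := by rw [real_inner_comm]; exact hwlu
  have hwlah : ⟪wl, a⟫ = θ := by
    rw [ha, inner_add_right, real_inner_smul_right, real_inner_self_eq_norm_mul_norm,
      hwlnorm, hwlu2]
    ring
  have hwlah : ⟪wl, ah⟫ = ‖a‖⁻¹ * θ := by
    rw [hah, real_inner_smul_right, hwlah]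
  rw [haheq, hwlu2] at hwlah
  have hpos : (0:ℝ) < ‖a‖⁻¹ * θ := by
    have h9 : (0:ℝ) < ‖a‖⁻¹ := by rw [inv_pos, norm_pos_iff]; exact ha0
    positivity
  rw [← hwlah] at hpos
  norm_num at hpos

lemma local_halfspace (hconv : Convex ℝ Ω) (hr : 0 < r)
    (hball : closedBall (0 : EuclideanSpace ℝ (Fin m)) r ⊆ Ω)
    {S : Finset (EuclideanSpace ℝ (Fin m))}
    (hΩ : Ω = convexHull ℝ (S : Set (EuclideanSpace ℝ (Fin m))))
    (hu : ‖u‖ = 1) (hfront : r • u ∈ frontier Ω)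
    {ε : ℝ} (hε : 0 < ε) (hball0 : ball (0 : EuclideanSpace ℝ (Fin m)) ε ⊆ Ω) :
    ∃ ρ > 0, ∀ x, ⟪u, x⟫ ≤ r → ‖x - r • u‖ < ρ → x ∈ Ω := by
  obtain ⟨ρ, hρ0, hρ⟩ := relint_face hconv hr hball hΩ hu hfront
  set p := r • u with hp
  refine ⟨min (ρ / 4) (r / 2), by positivity, fun x hx hxp => ?_⟩
  set β := r - ⟪u, x⟫ with hβ
  have hβ0 : 0 ≤ β := by rw [hβ]; linarith
  have hβle : β ≤ ‖x - p‖ := by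
    have h1 : β = ⟪u, p - x⟫ := by
      rw [hβ, inner_sub_right, hp, real_inner_smul_right, real_inner_self_eq_norm_mul_norm, hu]
      ring
    have h2 := real_inner_le_norm u (p - x)
    rw [hu, one_mul] at h2
    rw [h1, norm_sub_rev x p]
    exact h2
  set z : EuclideanSpace ℝ (Fin m) := -(ε / 2) • u with hz
  have hzΩ : z ∈ Ω := hball0 (by
    rw [mem_ball_zero_iff, hz, norm_smul, Real.norm_eq_abs, hu, mul_one, abs_neg,
      abs_of_pos (by positivity)]
    linarith)
  set t := β / (r + ε / 2) with ht
  have ht0 : 0 ≤ t := by positivity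
  have htle : t ≤ 1 / 2 := by
    rw [ht, div_le_iff₀ (by positivity)]
    have : ‖x - p‖ < r / 2 := lt_of_lt_of_le hxp (min_le_right _ _)
    nlinarith
  have h1t : (0:ℝ) < 1 - t := by linarith
  set y := (1 - t)⁻¹ • (x - t • z) with hy
  have htkey : t * (r + ε / 2) = β := by
    rw [ht]; field_simp
  have hinner2 : ⟪u, x - t • z⟫ = (1 - t) * r := by
    rw [inner_sub_right, real_inner_smul_right, hz, real_inner_smul_right,
      real_inner_self_eq_norm_mul_norm, hu, mul_one]
    linear_combination htkey + hβ
  have hyu : ⟪u, y⟫ = r := by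
    rw [hy, real_inner_smul_right, hinner2, ← mul_assoc,
      inv_mul_cancel₀ (ne_of_gt h1t), one_mul]
  have hpz : ‖p - z‖ = r + ε / 2 := by
    rw [hp, hz, ← sub_smul, norm_smul, Real.norm_eq_abs, hu, mul_one]
    rw [sub_neg_eq_add, abs_of_pos (by positivity)]
  have hyp : ‖y - p‖ < ρ := by
    have heq : y - p = (1 - t)⁻¹ • ((x - p) + t • (p - z)) := by
      rw [hy]
      have hmod : x - t • z = ((x - p) + t • (p - z)) + (1 - t) • p := by module
      rw [hmod, smul_add, smul_smul, inv_mul_cancel₀ (ne_of_gt h1t), one_smul]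
      abel
    rw [heq, norm_smul, Real.norm_eq_abs, abs_of_pos (by positivity)]
    have h2 : ‖(x - p) + t • (p - z)‖ ≤ ‖x - p‖ + t * ‖p - z‖ := by
      refine (norm_add_le _ _).trans ?_
      rw [norm_smul, Real.norm_eq_abs, abs_of_nonneg ht0]
    have h3 : t * ‖p - z‖ = β := by
      rw [hpz, ht]
      field_simp
    have h4 : (1 - t)⁻¹ ≤ 2 := by
      rw [inv_le_comm₀ h1t (by norm_num)]
      linarith
    have h5 : ‖x - p‖ < ρ / 4 := lt_of_lt_of_le hxp (min_le_left _ _)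
    calc (1 - t)⁻¹ * ‖x - p + t • (p - z)‖ ≤ 2 * (‖x - p‖ + β) := by
          have hnn : (0:ℝ) ≤ ‖x - p + t • (p - z)‖ := norm_nonneg _
          have h6 : ‖x - p + t • (p - z)‖ ≤ ‖x - p‖ + β := by rw [← h3]; exact h2
          nlinarith [inv_nonneg.2 h1t.le]
    _ ≤ 4 * ‖x - p‖ := by nlinarith
    _ < ρ := by linarith
  have hyΩ : y ∈ Ω := hρ y hyu hyp
  have hxeq : x = (1 - t) • y + t • z := by
    rw [hy, smul_inv_smul₀ (ne_of_gt h1t)]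
    abel
  rw [hxeq]
  exact hconv hyΩ hzΩ h1t.le ht0 (by ring)

lemma exists_delta {k : ℕ} {p : Fin k → EuclideanSpace ℝ (Fin m)}
    (hclosed : IsClosed Ω) (hr : 0 < r)
    (hball : closedBall (0 : EuclideanSpace ℝ (Fin m)) r ⊆ Ω)
    (hcontact : sphere (0 : EuclideanSpace ℝ (Fin m)) r ∩ frontier Ω = Set.range p)
    (hLH : ∀ i : Fin k, ∃ ρ > 0, ∀ x, ⟪p i, x⟫ ≤ r ^ 2 → ‖x - p i‖ < ρ → x ∈ Ω) :
    ∃ δ > 0, ∀ x ∉ Ω, ‖x‖ < r + δ → ∃ i, r ^ 2 < ⟪p i, x⟫ := by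
  by_contra hcon
  push_neg at hcon
  have hseq : ∀ n : ℕ, ∃ x, x ∉ Ω ∧ ‖x‖ < r + 1 / (n + 1) ∧ ∀ i, ⟪p i, x⟫ ≤ r ^ 2 := by
    intro n
    obtain ⟨x, h1, h2, h3⟩ := hcon (1 / (n + 1)) (by positivity)
    exact ⟨x, h1, h2, fun i => h3 i⟩
  choose xs h1 h2 h3 using hseq
  have hmem : ∀ n, xs n ∈ closedBall (0 : EuclideanSpace ℝ (Fin m)) (r + 1) := by
    intro n
    rw [mem_closedBall_zero_iff]
    have : 1 / ((n:ℝ) + 1) ≤ 1 := by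
      rw [div_le_one (by positivity)]; linarith [Nat.cast_nonneg (α := ℝ) n]
    linarith [h2 n]
  obtain ⟨xl, _, φ, hφ, htend⟩ :=
    (isCompact_closedBall (0 : EuclideanSpace ℝ (Fin m)) (r + 1)).tendsto_subseq hmem
  have hxlc : xl ∈ closure Ωᶜ :=
    mem_closure_of_tendsto htend (Filter.Eventually.of_forall fun n => h1 (φ n))
  have hnorm : ‖xl‖ ≤ r := by
    have ht1 : Filter.Tendsto (fun n => ‖xs (φ n)‖) Filter.atTop (nhds ‖xl‖) :=
      (continuous_norm.tendsto xl).comp htend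
    have ht2 : Filter.Tendsto (fun n : ℕ => r + 1 / ((n : ℝ) + 1)) Filter.atTop (nhds (r + 0)) :=
      tendsto_const_nhds.add tendsto_one_div_add_atTop_nhds_zero_nat
    rw [add_zero] at ht2
    refine le_of_tendsto_of_tendsto' ht1 ht2 fun n => ?_
    have h4 : (1 : ℝ) / (φ n + 1) ≤ 1 / (n + 1) := by
      apply one_div_le_one_div_of_le (by positivity)
      have h5 : n ≤ φ n := hφ.le_apply
      push_cast
      linarith [(Nat.cast_le (α := ℝ)).2 h5]
    linarith [h2 (φ n)]
  have hint : closure Ωᶜ = (interior Ω)ᶜ := by rw [closure_compl]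
  have hnotin : xl ∉ interior Ω := by
    rw [hint] at hxlc; exact hxlc
  have hnlt : ¬ (‖xl‖ < r) := by
    intro hlt
    apply hnotin
    apply interior_maximal (fun z hz => hball (ball_subset_closedBall hz)) isOpen_ball
    rwa [mem_ball_zero_iff]
  have hxleq : ‖xl‖ = r := le_antisymm hnorm (not_lt.1 hnlt)
  have hxlΩ : xl ∈ Ω := hball (by rw [mem_closedBall_zero_iff, hxleq])
  have hxlfront : xl ∈ frontier Ω := by
    rw [← closure_diff_interior]
    exact ⟨subset_closure hxlΩ, hnotin⟩
  have hxlrange : xl ∈ Set.range p := by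
    rw [← hcontact]
    exact ⟨mem_sphere_zero_iff_norm.2 hxleq, hxlfront⟩
  obtain ⟨i, hi⟩ := hxlrange
  obtain ⟨ρ, hρ0, hρ⟩ := hLH i
  have htend2 : Filter.Tendsto (fun n => ‖xs (φ n) - p i‖) Filter.atTop (nhds 0) := by
    have h7 : Filter.Tendsto (fun n => xs (φ n) - p i) Filter.atTop (nhds (xl - p i)) :=
      htend.sub tendsto_const_nhds
    rw [show xl - p i = 0 by rw [hi]; exact sub_self xl] at h7
    have h8 := (continuous_norm.tendsto (0 : EuclideanSpace ℝ (Fin m))).comp h7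
    rw [norm_zero] at h8
    exact h8.congr fun n => rfl
  have hev : ∀ᶠ n in Filter.atTop, ‖xs (φ n) - p i‖ < ρ :=
    (htend2.eventually (eventually_lt_nhds hρ0))
  obtain ⟨n, hn⟩ := hev.exists
  exact h1 (φ n) (hρ (xs (φ n)) (h3 (φ n) i) hn)

end BalanceGeo

end

open MeasureTheory Metric Set

noncomputable section

/-- `Ω` satisfies the balance law at the origin: for almost every `r ≥ 0`, the
vector-valued integral of `χ_Ω(r v) • v` over the unit sphere (with respect to the
surface, i.e. `(m-1)`-dimensional Hausdorff, measure) vanishes. -/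
def SatisfiesBalanceLaw {m : ℕ} (Ω : Set (EuclideanSpace ℝ (Fin m))) : Prop :=
  ∀ᵐ r ∂(volume.restrict (Ici (0 : ℝ))),
    (∫ v in sphere (0 : EuclideanSpace ℝ (Fin m)) 1,
      (Ω.indicator (fun _ => (1 : ℝ)) (r • v)) • v ∂(μH[(m : ℝ) - 1])) = 0

theorem stmt5 {m k : ℕ} (S : Finset (EuclideanSpace ℝ (Fin m)))
    (Ω : Set (EuclideanSpace ℝ (Fin m)))
    (hΩ : Ω = convexHull ℝ (S : Set (EuclideanSpace ℝ (Fin m))))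
    (h0 : (0 : EuclideanSpace ℝ (Fin m)) ∈ interior Ω)
    (p : Fin k → EuclideanSpace ℝ (Fin m)) (hinj : Function.Injective p)
    (hcontact :
      sphere (0 : EuclideanSpace ℝ (Fin m)) (infDist 0 Ωᶜ) ∩ frontier Ω = Set.range p)
    (hbal : SatisfiesBalanceLaw Ω) :
    ∑ i : Fin k, p i = 0 := by
  classical
  open scoped RealInnerProductSpace in
  rcases Nat.eq_zero_or_pos m with hm0 | hmpos
  · subst hm0
    haveI : Subsingleton (EuclideanSpace ℝ (Fin 0)) :=
      ⟨fun a b => by ext i; exact i.elim0⟩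
    have : ∀ i, p i = 0 := fun i => Subsingleton.elim _ _
    simp [this]
  rcases Nat.eq_zero_or_pos k with hk0 | hkpos
  · subst hk0
    simp
  have hm : 1 ≤ m := hmpos
  set i0 : Fin k := ⟨0, hkpos⟩ with hi0
  -- basic facts about Ω
  have hconv : Convex ℝ Ω := hΩ ▸ convex_convexHull ℝ _
  have hcomp : IsCompact Ω := hΩ ▸ S.finite_toSet.isCompact_convexHull ℝ
  have hclosed : IsClosed Ω := hcomp.isClosed
  obtain ⟨ε, hε0, hball0⟩ : ∃ ε > 0, ball (0 : EuclideanSpace ℝ (Fin m)) ε ⊆ Ω := by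
    obtain ⟨ε, hε0, hball0⟩ := Metric.mem_nhds_iff.1 (mem_interior_iff_mem_nhds.1 h0)
    exact ⟨ε, hε0, hball0⟩
  -- the complement is nonempty
  obtain ⟨R, hR0, hRb⟩ : ∃ R > 0, Ω ⊆ closedBall (0 : EuclideanSpace ℝ (Fin m)) R := by
    obtain ⟨R, hRb⟩ := hcomp.isBounded.subset_closedBall (0 : EuclideanSpace ℝ (Fin m))
    exact ⟨max R 1, lt_of_lt_of_le one_pos (le_max_right _ _),
      hRb.trans (closedBall_subset_closedBall (le_max_left _ _))⟩
  have hcne : Ωᶜ.Nonempty := by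
    refine ⟨EuclideanSpace.single (⟨0, hmpos⟩ : Fin m) (R + 1), fun hmem => ?_⟩
    have := hRb hmem
    rw [mem_closedBall_zero_iff, EuclideanSpace.norm_single] at this
    rw [Real.norm_eq_abs, abs_of_pos (by positivity)] at this
    linarith
  set r := infDist (0 : EuclideanSpace ℝ (Fin m)) Ωᶜ with hrdef
  have hr : 0 < r := by
    have h1 : ε ≤ r := by
      by_contra hlt
      push_neg at hlt
      rw [hrdef] at hlt
      obtain ⟨y, hy, hyd⟩ := (infDist_lt_iff hcne).1 hlt
      exact hy (hball0 (by rw [mem_ball, dist_comm]; exact hyd))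
    linarith
  have hballr : closedBall (0 : EuclideanSpace ℝ (Fin m)) r ⊆ Ω := by
    have hopen : ball (0 : EuclideanSpace ℝ (Fin m)) r ⊆ Ω := by
      intro y hy
      by_contra hyΩ
      have := infDist_le_dist_of_mem (x := (0 : EuclideanSpace ℝ (Fin m))) (show y ∈ Ωᶜ from hyΩ)
      rw [mem_ball, dist_comm] at hy
      linarith
    calc closedBall (0 : EuclideanSpace ℝ (Fin m)) r
        = closure (ball (0 : EuclideanSpace ℝ (Fin m)) r) := (closure_ball 0 (ne_of_gt hr)).symm
      _ ⊆ closure Ω := closure_mono hopen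
      _ = Ω := hclosed.closure_eq
  -- contact points
  have hpmem : ∀ i, p i ∈ sphere (0 : EuclideanSpace ℝ (Fin m)) r ∩ frontier Ω := by
    intro i
    rw [hrdef, hcontact]
    exact ⟨i, rfl⟩
  have hpnorm : ∀ i, ‖p i‖ = r := fun i => mem_sphere_zero_iff_norm.1 (hpmem i).1
  have hpfront : ∀ i, p i ∈ frontier Ω := fun i => (hpmem i).2
  set u : Fin k → EuclideanSpace ℝ (Fin m) := fun i => r⁻¹ • p i with hudef
  have hru : ∀ i, r • u i = p i := by
    intro i
    rw [hudef]
    exact smul_inv_smul₀ (ne_of_gt hr) (p i)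
  have hunorm : ∀ i, ‖u i‖ = 1 := by
    intro i
    rw [hudef]
    simp only []
    rw [norm_smul, Real.norm_eq_abs, abs_of_pos (by positivity), hpnorm i]
    field_simp
  have hufront : ∀ i, r • u i ∈ frontier Ω := fun i => (hru i) ▸ hpfront i
  have hsup : ∀ i, ∀ x ∈ Ω, ⟪u i, x⟫ ≤ r :=
    fun i => BalanceGeo.support_le hconv hr hballr (hunorm i) (hufront i)
  have huinj : Function.Injective u := by
    intro i j hij
    apply hinj
    rw [← hru i, ← hru j, hij]
  -- local halfspace structure, converted to the `p` form
  have hLH : ∀ i : Fin k, ∃ ρ > 0, ∀ x, ⟪p i, x⟫ ≤ r ^ 2 → ‖x - p i‖ < ρ → x ∈ Ω := by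
    intro i
    obtain ⟨ρ, hρ0, hρ⟩ := BalanceGeo.local_halfspace hconv hr hballr hΩ (hunorm i)
      (hufront i) hε0 hball0
    refine ⟨ρ, hρ0, fun x hx hxd => ?_⟩
    apply hρ x
    · have h1 : ⟪p i, x⟫ = r * ⟪u i, x⟫ := by
        rw [← hru i, real_inner_smul_left]
      rw [h1] at hx
      nlinarith
    · rwa [hru i]
  obtain ⟨δ, hδ0, hδ⟩ := BalanceGeo.exists_delta hclosed hr hballr hcontact hLH
  -- minimal distance between contact directions
  obtain ⟨d, hd0, hd⟩ : ∃ d > 0, ∀ i j : Fin k, i ≠ j → d ≤ ‖u i - u j‖ := by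
    have hne : (Finset.univ : Finset (Fin k × Fin k)).Nonempty := ⟨(i0, i0), Finset.mem_univ _⟩
    refine ⟨Finset.univ.inf' hne (fun q => if q.1 = q.2 then 1 else ‖u q.1 - u q.2‖), ?_, ?_⟩
    · rw [gt_iff_lt, Finset.lt_inf'_iff]
      intro q _
      by_cases hq : q.1 = q.2
      · rw [if_pos hq]; norm_num
      · rw [if_neg hq, norm_pos_iff, sub_ne_zero]
        exact fun h => hq (huinj h)
    · intro i j hij
      have h1 := Finset.inf'_le (s := (Finset.univ : Finset (Fin k × Fin k)))
        (fun q => if q.1 = q.2 then 1 else ‖u q.1 - u q.2‖) (Finset.mem_univ (i, j))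
      exact h1.trans (by simp [hij])
  -- choose a good radius
  set δ' := min δ (r * d ^ 2 / 8) with hδ'
  have hδ'0 : 0 < δ' := lt_min hδ0 (by positivity)
  have hbal2 : ∀ᵐ r' ∂(volume.restrict (Ici (0 : ℝ))),
      (∫ v in sphere (0 : EuclideanSpace ℝ (Fin m)) 1,
        (Ω.indicator (fun _ => (1 : ℝ)) (r' • v)) • v ∂(μH[(m : ℝ) - 1])) = 0 := hbal
  rw [MeasureTheory.ae_iff] at hbal2
  obtain ⟨rr, hrrIoo, hrrP⟩ : ∃ rr ∈ Ioo r (r + δ'),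
      (∫ v in sphere (0 : EuclideanSpace ℝ (Fin m)) 1,
        (Ω.indicator (fun _ => (1 : ℝ)) (rr • v)) • v ∂(μH[(m : ℝ) - 1])) = 0 := by
    by_contra hcon
    push_neg at hcon
    have hsub : Ioo r (r + δ') ⊆ {a | ¬ (∫ v in sphere (0 : EuclideanSpace ℝ (Fin m)) 1,
        (Ω.indicator (fun _ => (1 : ℝ)) (a • v)) • v ∂(μH[(m : ℝ) - 1])) = 0} :=
      fun a ha => hcon a ha
    have h1 : (volume.restrict (Ici (0:ℝ))) (Ioo r (r + δ')) = 0 :=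
      le_antisymm (hbal2 ▸ measure_mono hsub) (by simp)
    rw [Measure.restrict_apply measurableSet_Ioo] at h1
    have h2 : Ioo r (r + δ') ∩ Ici (0:ℝ) = Ioo r (r + δ') :=
      inter_eq_self_of_subset_left (fun a ha => le_of_lt (lt_trans hr ha.1))
    rw [h2, Real.volume_Ioo] at h1
    have : r + δ' - r = δ' := by ring
    rw [this] at h1
    rw [ENNReal.ofReal_eq_zero] at h1
    linarith
  obtain ⟨hrr1, hrr2⟩ := hrrIoo
  set t := r / rr with htdef
  have hrr0 : 0 < rr := lt_trans hr hrr1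
  have ht0 : 0 < t := by positivity
  have ht1 : t < 1 := by
    rw [htdef, div_lt_one hrr0]
    exact hrr1
  -- the caps
  set C : Fin k → Set (EuclideanSpace ℝ (Fin m)) := fun i => BalanceAux.cap (u i) t with hC
  set B : Set (EuclideanSpace ℝ (Fin m)) := (fun v => rr • v) ⁻¹' Ω with hB
  have hBmeas : MeasurableSet B :=
    (continuous_const_smul rr).measurable hclosed.measurableSet
  have hCmeas : ∀ i, MeasurableSet (C i) := fun i => BalanceAux.measurableSet_cap _ _
  have hCsub : ∀ i, C i ⊆ sphere (0 : EuclideanSpace ℝ (Fin m)) 1 :=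
    fun i => BalanceAux.cap_subset_sphere _ _
  -- set identity
  have hset : sphere (0 : EuclideanSpace ℝ (Fin m)) 1 ∩ B =
      sphere (0 : EuclideanSpace ℝ (Fin m)) 1 \ ⋃ i, C i := by
    ext v
    constructor
    · rintro ⟨hv, hvB⟩
      refine ⟨hv, fun hvU => ?_⟩
      obtain ⟨Ci, ⟨i, rfl⟩, hvC⟩ := hvU
      have h1 : t < ⟪u i, v⟫ := hvC.2
      have h2 := hsup i (rr • v) hvB
      rw [real_inner_smul_right] at h2
      rw [htdef] at h1
      rw [div_lt_iff₀ hrr0] at h1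
      linarith [mul_comm (⟪u i, v⟫ : ℝ) rr]
    · rintro ⟨hv, hvU⟩
      refine ⟨hv, ?_⟩
      by_contra hvB2
      have hnorm : ‖rr • v‖ = rr := by
        rw [norm_smul, Real.norm_eq_abs, abs_of_pos hrr0, mem_sphere_zero_iff_norm.1 hv, mul_one]
      have h3 : ‖rr • v‖ < r + δ := by
        rw [hnorm]
        calc rr < r + δ' := hrr2
          _ ≤ r + δ := by
              have := min_le_left δ (r * d ^ 2 / 8)
              rw [← hδ'] at this
              linarith
      obtain ⟨i, hi⟩ := hδ (rr • v) hvB2 h3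
      apply hvU
      refine mem_iUnion.2 ⟨i, ⟨hv, ?_⟩⟩
      show t < ⟪u i, v⟫
      rw [real_inner_smul_right, ← hru i, real_inner_smul_left] at hi
      rw [htdef, div_lt_iff₀ hrr0]
      nlinarith
  -- disjointness of the caps
  have hdisj : Pairwise (Function.onFun Disjoint C) := by
    intro i j hij
    rw [Function.onFun, Set.disjoint_left]
    rintro v ⟨hv1, hv2⟩ ⟨hv1', hv2'⟩
    have hvn : ‖v‖ = 1 := mem_sphere_zero_iff_norm.1 hv1
    have e1 : ‖u i - v‖ ^ 2 = 2 - 2 * ⟪u i, v⟫ := by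
      rw [norm_sub_sq_real, hunorm i, hvn]; ring
    have e2 : ‖u j - v‖ ^ 2 = 2 - 2 * ⟪u j, v⟫ := by
      rw [norm_sub_sq_real, hunorm j, hvn]; ring
    have h1 : t < ⟪u i, v⟫ := hv2
    have h2 : t < ⟪u j, v⟫ := hv2'
    have h3 : ‖u i - u j‖ ≤ ‖u i - v‖ + ‖u j - v‖ := by
      rw [show u i - u j = (u i - v) - (u j - v) by abel]
      exact norm_sub_le _ _
    have h4 : d ≤ ‖u i - u j‖ := hd i j hij
    have h5 : 1 - t < d ^ 2 / 8 := by
      have h6 : δ' ≤ r * d ^ 2 / 8 := min_le_right _ _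
      have h7 : rr - r < δ' := by linarith
      have h8 : 1 - t = (rr - r) / rr := by
        rw [htdef]; field_simp
      rw [h8, div_lt_div_iff₀ hrr0 (by norm_num : (0:ℝ) < 8)]
      have h9 : r < rr := hrr1
      nlinarith
    nlinarith [norm_nonneg (u i - v), norm_nonneg (u j - v), norm_nonneg (u i - u j),
      sq_nonneg (‖u i - v‖ - ‖u j - v‖)]
  -- rewrite the balance integral
  have hintegrand : ∀ v ∈ sphere (0 : EuclideanSpace ℝ (Fin m)) 1,
      (Ω.indicator (fun _ => (1 : ℝ)) (rr • v)) • v = B.indicator (fun w => w) v := by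
    intro v _
    by_cases h : rr • v ∈ Ω
    · rw [Set.indicator_of_mem h, Set.indicator_of_mem (show v ∈ B from h), one_smul]
    · rw [Set.indicator_of_notMem h, Set.indicator_of_notMem (show v ∉ B from h), zero_smul]
  rw [setIntegral_congr_fun isClosed_sphere.measurableSet hintegrand] at hrrP
  rw [setIntegral_indicator hBmeas] at hrrP
  rw [hset] at hrrP
  -- split the sphere integral
  have hintid : IntegrableOn (fun v : EuclideanSpace ℝ (Fin m) => v)
      (sphere (0 : EuclideanSpace ℝ (Fin m)) 1) (μH[(m : ℝ) - 1]) :=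
    BalanceAux.integrableOn_subset_sphere hm continuous_id subset_rfl
  have hUmeas : MeasurableSet (⋃ i, C i) := MeasurableSet.iUnion hCmeas
  have hsplit := integral_inter_add_diff (μ := μH[(m : ℝ) - 1])
    (s := sphere (0 : EuclideanSpace ℝ (Fin m)) 1) (t := ⋃ i, C i)
    (f := fun v => v) hUmeas hintid
  have hUsub : (⋃ i, C i) ⊆ sphere (0 : EuclideanSpace ℝ (Fin m)) 1 :=
    iUnion_subset hCsub
  rw [inter_eq_self_of_subset_right hUsub] at hsplit
  rw [hrrP, add_zero, BalanceAux.integral_id_sphere_zero] at hsplit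
  -- decompose into the individual caps
  have hsum : ∫ v in ⋃ i, C i, v ∂(μH[(m : ℝ) - 1]) =
      ∑ i : Fin k, ∫ v in C i, v ∂(μH[(m : ℝ) - 1]) :=
    integral_iUnion_fintype hCmeas hdisj
      (fun i => BalanceAux.integrableOn_subset_sphere hm continuous_id (hCsub i))
  rw [hsum] at hsplit
  -- each cap integral is `c • u i`
  set c := ∫ v in BalanceAux.cap (u i0) t, ⟪u i0, v⟫ ∂(μH[(m : ℝ) - 1]) with hc
  have hc0 : 0 < c := BalanceAux.integral_inner_cap_pos hm (hunorm i0) ht0 ht1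
  have hI0 : ∫ v in C i0, v ∂(μH[(m : ℝ) - 1]) = c • u i0 :=
    BalanceAux.integral_cap_eq hm (hunorm i0) ht0 ht1
  have hIi : ∀ i, ∫ v in C i, v ∂(μH[(m : ℝ) - 1]) = c • u i := by
    intro i
    have hswap := BalanceAux.integral_cap_swap hm (hunorm i0) (hunorm i) ht0 ht1
    rw [hC]
    rw [hswap, hI0, LinearIsometryEquiv.map_smul, Submodule.reflection_sub (by rw [hunorm i0, hunorm i])]
  simp_rw [hIi] at hsplit
  rw [← Finset.smul_sum] at hsplit
  have husum : ∑ i : Fin k, u i = 0 := by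
    rcases smul_eq_zero.mp hsplit with h | h
    · exact absurd h (ne_of_gt hc0)
    · exact h
  have hpsum : ∑ i : Fin k, p i = r • ∑ i : Fin k, u i := by
    rw [Finset.smul_sum]
    congr 1
    funext i
    rw [hru i]
  rw [hpsum, husum, smul_zero]
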